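/- arXiv:1809.10998 — 6 statements merged into one kernel-verified Lean document; each statement's English description precedes it below -/
import Mathlib

section
/- Let A* = max_{1≤i≤C} max(0, i − V(i)) (with A* = 0 if C = 0). Then (a) the set S* = {A*+1, …, C} admits a feasible assignment, and (b) every set S ⊆ {1,…,C} admitting a feasible assignment satisfies |S| ≤ C − A*. Consequently, the minimum number of skipped chunks over all feasible assignments equals A*, and this minimum is achieved by skipping exactly the first A* chunks. -/
/-- Cumulative bandwidth of a link up to time `t`: `R(t) = Σ_{j=1}^t B(j)`. -/
noncomputable def cumBW (B : ℕ → ℝ) (t : ℕ) : ℝ := ∑ j ∈ Finset.Icc 1 t, B j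

/-- `V(i) = Σ_{u=1}^U ⌊min(η_u, R_u(d(i)))/Y⌋`. -/
noncomputable def Vval (U : ℕ) (Y : ℝ) (d : ℕ → ℕ) (B : Fin U → ℕ → ℝ)
    (η : Fin U → ℝ) (i : ℕ) : ℕ :=
  ∑ u : Fin U, ⌊min (η u) (cumBW (B u) (d i)) / Y⌋₊

/-- A feasible assignment for a set `S` of chunks: a link choice `ℓ i` and download
amounts `z i j ≥ 0` so that each chunk `i ∈ S` gets its full layer of size `Y` over
link `ℓ i` by its deadline `d i`, respecting per-slot bandwidths and per-link
maximum contributions. -/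
def FeasibleAssignment (U : ℕ) (Y : ℝ) (d : ℕ → ℕ) (B : Fin U → ℕ → ℝ)
    (η : Fin U → ℝ) (S : Finset ℕ) : Prop :=
  ∃ (ℓ : ℕ → Fin U) (z : ℕ → ℕ → ℝ),
    (∀ i ∈ S, ∀ j, 0 ≤ z i j) ∧
    (∀ i ∈ S, ∑ j ∈ Finset.Icc 1 (d i), z i j = Y) ∧
    (∀ i ∈ S, ∀ j, (j < 1 ∨ d i < j) → z i j = 0) ∧
    (∀ u : Fin U, ∀ j, 1 ≤ j →
      ∑ i ∈ S.filter (fun i => ℓ i = u), z i j ≤ B u j) ∧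
    (∀ u : Fin U,
      ∑ i ∈ S.filter (fun i => ℓ i = u), ∑ j ∈ Finset.Icc 1 (d i), z i j ≤ η u)
/-!
Give each link `u` the `⌊min(η_u, R_u(d i))/Y⌋` "slots" it can fill by the deadline of chunk `i`,
so that `V(i)` counts all slots available to chunks `≤ i`. A feasible set can use at most `V(i)`
slots for its chunks `≤ i`; conversely, if every prefix of `S` fits, placing the chunks of `S` in
increasing order into free slots (pigeonhole) and letting the `r`-th chunk of link `u` download the
`r`-th block `[rY, (r+1)Y]` of the cumulative bandwidth `R_u` gives a feasible assignment. For
`S = {A*+1, …, C}` the prefix condition is exactly `i - A* ≤ V(i)`, and for any feasible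
`S ⊆ {1, …, C}` it gives `|S| ≤ V(i) + (C - i)` for every `i`.
-/

open Finset

lemma sum_Icc_one_sub_pred (g : ℕ → ℝ) (n : ℕ) :
    ∑ j ∈ Icc 1 n, (g j - g (j - 1)) = g n - g 0 := by
  induction n with
  | zero => simp
  | succ n ih => rw [sum_Icc_succ_top (by omega), ih, Nat.add_sub_cancel]; ring

section CumBW

variable {B : ℕ → ℝ}

@[simp]
lemma cumBW_zero : cumBW B 0 = 0 := by simp [cumBW]

lemma cumBW_sub_pred {j : ℕ} (hj : 1 ≤ j) : cumBW B j - cumBW B (j - 1) = B j := by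
  obtain ⟨k, rfl⟩ : ∃ k, j = k + 1 := ⟨j - 1, by omega⟩
  rw [cumBW, sum_Icc_succ_top (by omega), Nat.add_sub_cancel, cumBW]
  ring

lemma cumBW_nonneg (hB : ∀ j, 1 ≤ j → 0 ≤ B j) (t : ℕ) : 0 ≤ cumBW B t :=
  sum_nonneg fun j hj => hB j (mem_Icc.mp hj).1

lemma cumBW_mono (hB : ∀ j, 1 ≤ j → 0 ≤ B j) : Monotone (cumBW B) := fun _ _ hst =>
  sum_le_sum_of_subset_of_nonneg (Icc_subset_Icc_right hst) fun j hj _ => hB j (mem_Icc.mp hj).1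

end CumBW

noncomputable def linkCap (Y : ℝ) (d : ℕ → ℕ) (B : ℕ → ℝ) (η : ℝ) (i : ℕ) : ℕ :=
  ⌊min η (cumBW B (d i)) / Y⌋₊

section LinkCap

variable {Y : ℝ} {d : ℕ → ℕ} {B : ℕ → ℝ} {η : ℝ}

lemma linkCap_mono (hY : 0 < Y) (hd : Monotone d) (hB : ∀ j, 1 ≤ j → 0 ≤ B j) :
    Monotone (linkCap Y d B η) := fun _ _ hii' =>
  Nat.floor_le_floor <| div_le_div_of_nonneg_right
    (min_le_min le_rfl (cumBW_mono hB (hd hii'))) hY.le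

lemma linkCap_mul_le (hY : 0 < Y) (hB : ∀ j, 1 ≤ j → 0 ≤ B j) (hη : 0 ≤ η) (i : ℕ) :
    linkCap Y d B η i * Y ≤ min η (cumBW B (d i)) :=
  (le_div_iff₀ hY).mp <| Nat.floor_le <| div_nonneg (le_min hη (cumBW_nonneg hB _)) hY.le

lemma le_linkCap_of_mul_le (hY : 0 < Y) {n : ℕ} {i : ℕ} (hη : n * Y ≤ η)
    (hR : n * Y ≤ cumBW B (d i)) : n ≤ linkCap Y d B η i :=
  Nat.le_floor <| (le_div_iff₀ hY).mpr (le_min hη hR)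

end LinkCap

lemma card_filter_le_Vval_of_feasible {U : ℕ} {Y : ℝ} (hY : 0 < Y) {d : ℕ → ℕ} (hd : Monotone d)
    {B : Fin U → ℕ → ℝ} {η : Fin U → ℝ} {S : Finset ℕ} (hfeas : FeasibleAssignment U Y d B η S)
    (i : ℕ) : #{k ∈ S | k ≤ i} ≤ Vval U Y d B η i := by
  classical
  obtain ⟨ℓ, z, hz0, hzY, -, hslot, hη⟩ := hfeas
  rw [card_eq_sum_card_fiberwise (f := ℓ) (t := univ) fun _ _ => mem_univ _]
  refine sum_le_sum fun u _ => ?_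
  set T := {k ∈ {k ∈ S | k ≤ i} | ℓ k = u}
  have hTS : T ⊆ {k ∈ S | ℓ k = u} := filter_subset_filter _ (filter_subset _ S)
  have hT : #T * Y = ∑ k ∈ T, ∑ j ∈ Icc 1 (d k), z k j := by
    rw [sum_congr rfl fun k hk => hzY k (mem_filter.mp (hTS hk)).1, sum_const, nsmul_eq_mul]
  refine le_linkCap_of_mul_le hY (hT ▸ ?_) (hT ▸ ?_)
  · exact (sum_le_sum_of_subset_of_nonneg hTS fun k hk _ =>
      sum_nonneg fun j _ => hz0 k (mem_filter.mp hk).1 j).trans (hη u)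
  · calc ∑ k ∈ T, ∑ j ∈ Icc 1 (d k), z k j
        ≤ ∑ k ∈ T, ∑ j ∈ Icc 1 (d i), z k j := by
          refine sum_le_sum fun k hk => ?_
          obtain ⟨hkS, hki⟩ := mem_filter.mp (mem_filter.mp hk).1
          exact sum_le_sum_of_subset_of_nonneg (Icc_subset_Icc_right (hd hki))
            fun j _ _ => hz0 k hkS j
      _ = ∑ j ∈ Icc 1 (d i), ∑ k ∈ T, z k j := sum_comm
      _ ≤ cumBW (B u) (d i) := sum_le_sum fun j hj =>
          (sum_le_sum_of_subset_of_nonneg hTS fun k hk _ => hz0 k (mem_filter.mp hk).1 j).trans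
            (hslot u j (mem_Icc.mp hj).1)

/-- The part of the `r`-th block `[r Y, (r + 1) Y]` lying below `t`. -/
def blockFill (Y : ℝ) (r : ℕ) (t : ℝ) : ℝ := min (max (t - r * Y) 0) Y

section BlockFill

variable {Y : ℝ}

lemma blockFill_mono (r : ℕ) : Monotone (blockFill Y r) := fun _ _ h =>
  min_le_min_right _ (max_le_max_right _ (by linarith))

lemma blockFill_of_le (hY : 0 ≤ Y) {r : ℕ} {t : ℝ} (h : t ≤ r * Y) : blockFill Y r t = 0 := by
  rw [blockFill, max_eq_right (by linarith), min_eq_left hY]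

lemma blockFill_of_ge {r : ℕ} {t : ℝ} (h : (r + 1) * Y ≤ t) : blockFill Y r t = Y := by
  rw [blockFill, min_eq_right (le_max_of_le_left (by linarith))]

lemma sum_range_blockFill (hY : 0 ≤ Y) {t : ℝ} (ht : 0 ≤ t) (N : ℕ) :
    ∑ r ∈ range N, blockFill Y r t = min t (N * Y) := by
  induction N with
  | zero => simp [ht]
  | succ N ih =>
    rw [sum_range_succ, ih, blockFill]
    push_cast
    rcases le_total t (N * Y) with h | h
    · rw [min_eq_left h, max_eq_right (by linarith), min_eq_left hY,
        min_eq_left (by linarith)]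
      ring
    · rw [min_eq_right h, max_eq_left (by linarith)]
      rcases le_total (t - N * Y) Y with h' | h'
      · rw [min_eq_left h', min_eq_left (by linarith)]; ring
      · rw [min_eq_right h', min_eq_right (by linarith)]; ring

/-- Distinct blocks are disjoint, so together they take at most `y - x` out of `[x, y]`. -/
lemma sum_blockFill_sub_le (hY : 0 ≤ Y) {x y : ℝ} (hx : 0 ≤ x) (hxy : x ≤ y) (K : Finset ℕ) :
    ∑ r ∈ K, (blockFill Y r y - blockFill Y r x) ≤ y - x := by
  obtain ⟨N, hKN⟩ := K.exists_nat_subset_range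
  calc ∑ r ∈ K, (blockFill Y r y - blockFill Y r x)
      ≤ ∑ r ∈ range N, (blockFill Y r y - blockFill Y r x) :=
        sum_le_sum_of_subset_of_nonneg hKN fun r _ _ => sub_nonneg.mpr (blockFill_mono r hxy)
    _ = min y (N * Y) - min x (N * Y) := by
        rw [sum_sub_distrib, sum_range_blockFill hY (hx.trans hxy), sum_range_blockFill hY hx]
    _ ≤ y - x := by simp only [min_def]; split_ifs <;> linarith

end BlockFill

/-- A chunk owning the `r`-th block of a link with cumulative bandwidth `R` receives in slot `j`
the part of that block delivered during slot `j`. -/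
def blockSchedule (Y : ℝ) (R : ℕ → ℝ) (r j : ℕ) : ℝ :=
  blockFill Y r (R j) - blockFill Y r (R (j - 1))

section BlockSchedule

variable {Y : ℝ} {R : ℕ → ℝ} {r : ℕ}

lemma blockSchedule_nonneg (hR : Monotone R) (j : ℕ) : 0 ≤ blockSchedule Y R r j :=
  sub_nonneg.mpr (blockFill_mono r (hR (Nat.sub_le j 1)))

@[simp]
lemma blockSchedule_zero : blockSchedule Y R r 0 = 0 := sub_self _

lemma blockSchedule_of_lt (hR : Monotone R) {n j : ℕ} (hn : (r + 1) * Y ≤ R n) (hj : n < j) :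
    blockSchedule Y R r j = 0 := by
  rw [blockSchedule, blockFill_of_ge (hn.trans (hR hj.le)),
    blockFill_of_ge (hn.trans (hR (by omega))), sub_self]

lemma sum_blockSchedule (hY : 0 ≤ Y) (hR0 : R 0 = 0) {n : ℕ} (hn : (r + 1) * Y ≤ R n) :
    ∑ j ∈ Icc 1 n, blockSchedule Y R r j = Y := by
  unfold blockSchedule
  rw [sum_Icc_one_sub_pred (fun j => blockFill Y r (R j)),
    blockFill_of_ge hn, hR0, blockFill_of_le hY (by positivity), sub_zero]

lemma sum_blockSchedule_le (hY : 0 ≤ Y) (hR : Monotone R) (hR0 : 0 ≤ R 0) (K : Finset ℕ)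
    (j : ℕ) : ∑ r ∈ K, blockSchedule Y R r j ≤ R j - R (j - 1) :=
  sum_blockFill_sub_le hY (hR0.trans (hR (Nat.zero_le _))) (hR (Nat.sub_le j 1)) K

end BlockSchedule

/-- The largest chunk `m` of `S` finds a slot `(u, r)`, `r < F u m`, left free by the others by
pigeonhole, since the prefix condition at `m` says `|S| ≤ ∑ u, F u m`. -/
theorem exists_injOn_slots {ι : Type*} [Fintype ι] [Nonempty ι] (F : ι → ℕ → ℕ) (S : Finset ℕ)
    (hS : ∀ i ∈ S, #{k ∈ S | k ≤ i} ≤ ∑ u, F u i) :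
    ∃ (ℓ : ℕ → ι) (r : ℕ → ℕ), (∀ i ∈ S, r i < F (ℓ i) i) ∧
      Set.InjOn (fun i => (ℓ i, r i)) S := by
  classical
  induction S using Finset.induction_on_max with
  | empty => exact ⟨fun _ => Classical.arbitrary ι, fun _ => 0, by simp, by simp⟩
  | insert m s hlt ih =>
    have hm : m ∉ s := fun h => (hlt m h).false
    obtain ⟨ℓ, r, hr, hinj⟩ := ih fun i hi => by
      have hfilter : {k ∈ insert m s | k ≤ i} = {k ∈ s | k ≤ i} := by
        rw [filter_insert, if_neg (by linarith [hlt i hi])]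
      exact hfilter ▸ hS i (mem_insert_of_mem hi)
    have hcard : #s < ∑ u, F u m := by
      have := hS m (mem_insert_self m s)
      rw [filter_true_of_mem fun k hk => ?_, card_insert_of_notMem hm] at this
      · omega
      · rcases mem_insert.mp hk with rfl | hk
        exacts [le_rfl, (hlt k hk).le]
    let slots : Finset (ι × ℕ) :=
      (univ.sigma fun u => range (F u m)).map (Equiv.sigmaEquivProd ι ℕ).toEmbedding
    obtain ⟨⟨u, k⟩, hfree, hnew⟩ :=
      exists_mem_notMem_of_card_lt_card (s := s.image fun i => (ℓ i, r i)) (t := slots)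
        (card_image_le.trans_lt (by simpa [slots] using hcard))
    have hk : k < F u m := by simpa [slots] using hfree
    have hold : Set.EqOn (fun i => (Function.update ℓ m u i, Function.update r m k i))
        (fun i => (ℓ i, r i)) s := fun i hi => by
      simp [Function.update_of_ne (ne_of_lt (hlt i hi))]
    refine ⟨Function.update ℓ m u, Function.update r m k, fun i hi => ?_, ?_⟩
    · rcases mem_insert.mp hi with rfl | hi
      · simpa using hk
      · simpa [Function.update_of_ne (ne_of_lt (hlt i hi))] using hr i hi
    · rw [coe_insert, Set.injOn_insert (by simpa using hm), hold.injOn_iff, hold.image_eq]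
      exact ⟨hinj, by simpa using hnew⟩

section Construction

variable {U : ℕ} {Y : ℝ} {d : ℕ → ℕ} {B : Fin U → ℕ → ℝ} {η : Fin U → ℝ}

/-- The chunk occupying slot `(ℓ i, r i)` downloads the `r i`-th block of its link. -/
theorem feasibleAssignment_of_injOn_slots (hY : 0 < Y) (hd : Monotone d)
    (hB : ∀ u j, 1 ≤ j → 0 ≤ B u j) (hη : ∀ u, 0 ≤ η u) {S : Finset ℕ} (ℓ : ℕ → Fin U)
    (r : ℕ → ℕ) (hr : ∀ i ∈ S, r i < linkCap Y d (B (ℓ i)) (η (ℓ i)) i)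
    (hinj : Set.InjOn (fun i => (ℓ i, r i)) S) : FeasibleAssignment U Y d B η S := by
  classical
  have hfill : ∀ i ∈ S, (r i + 1) * Y ≤ min (η (ℓ i)) (cumBW (B (ℓ i)) (d i)) := fun i hi =>
    calc (r i + 1) * Y ≤ linkCap Y d (B (ℓ i)) (η (ℓ i)) i * Y := by
          gcongr; exact_mod_cast hr i hi
      _ ≤ _ := linkCap_mul_le hY (hB _) (hη _) i
  have hfiber : ∀ u, Set.InjOn r ↑({i ∈ S | ℓ i = u} : Finset ℕ) := fun u i hi i' hi' h => by
    simp only [mem_coe, mem_filter] at hi hi'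
    exact hinj hi.1 hi'.1 (Prod.ext (hi.2.trans hi'.2.symm) h)
  have hsum : ∀ i ∈ S, ∑ j ∈ Icc 1 (d i), blockSchedule Y (cumBW (B (ℓ i))) (r i) j = Y :=
    fun i hi => sum_blockSchedule hY.le cumBW_zero ((hfill i hi).trans (min_le_right _ _))
  refine ⟨ℓ, fun i j => blockSchedule Y (cumBW (B (ℓ i))) (r i) j,
    fun i _ j => blockSchedule_nonneg (cumBW_mono (hB _)) j, hsum, ?_, fun u j hj => ?_,
    fun u => ?_⟩
  · rintro i hi j (hj | hj)
    · simp [Nat.lt_one_iff.mp hj]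
    · exact blockSchedule_of_lt (cumBW_mono (hB _)) ((hfill i hi).trans (min_le_right _ _)) hj
  · calc ∑ i ∈ S with ℓ i = u, blockSchedule Y (cumBW (B (ℓ i))) (r i) j
        = ∑ k ∈ image r {i ∈ S | ℓ i = u}, blockSchedule Y (cumBW (B u)) k j := by
          rw [sum_image (hfiber u)]
          exact sum_congr rfl fun i hi => by rw [(mem_filter.mp hi).2]
      _ ≤ cumBW (B u) j - cumBW (B u) (j - 1) :=
          sum_blockSchedule_le hY.le (cumBW_mono (hB u)) cumBW_zero.ge _ j
      _ = B u j := cumBW_sub_pred hj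
  · have hcap : #{i ∈ S | ℓ i = u} ≤ linkCap Y d (B u) (η u) (S.sup id) := by
      rw [← card_range (linkCap Y d (B u) (η u) (S.sup id))]
      refine card_le_card_of_injOn r (fun i hi => ?_) (hfiber u)
      obtain ⟨hiS, rfl⟩ := mem_filter.mp hi
      exact mem_range.mpr ((hr i hiS).trans_le
        (linkCap_mono hY hd (hB _) (le_sup (f := id) hiS)))
    calc ∑ i ∈ S with ℓ i = u, ∑ j ∈ Icc 1 (d i), blockSchedule Y (cumBW (B (ℓ i))) (r i) j
        = #{i ∈ S | ℓ i = u} * Y := by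
          rw [sum_congr rfl fun i hi => hsum i (mem_filter.mp hi).1, sum_const, nsmul_eq_mul]
      _ ≤ linkCap Y d (B u) (η u) (S.sup id) * Y := by gcongr
      _ ≤ η u := (linkCap_mul_le hY (hB u) (hη u) _).trans (min_le_left _ _)

theorem feasibleAssignment_of_card_filter_le (hU : 1 ≤ U) (hY : 0 < Y) (hd : Monotone d)
    (hB : ∀ u j, 1 ≤ j → 0 ≤ B u j) (hη : ∀ u, 0 ≤ η u) {S : Finset ℕ}
    (hS : ∀ i ∈ S, #{k ∈ S | k ≤ i} ≤ Vval U Y d B η i) : FeasibleAssignment U Y d B η S := by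
  have : Nonempty (Fin U) := ⟨⟨0, hU⟩⟩
  obtain ⟨ℓ, r, hr, hinj⟩ := exists_injOn_slots (fun u => linkCap Y d (B u) (η u)) S hS
  exact feasibleAssignment_of_injOn_slots hY hd hB hη ℓ r hr hinj

end Construction

/-- The minimum number of skipped chunks is `A* = max_{1 ≤ i ≤ C} max(0, i − V(i))`:
(a) the set `{A*+1, …, C}` admits a feasible assignment, and (b) every feasible set
`S ⊆ {1,…,C}` has `|S| ≤ C − A*`. -/
theorem min_skips_eq_forward_scan
    (C U : ℕ) (hU : 1 ≤ U) (Y : ℝ) (hY : 0 < Y)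
    (d : ℕ → ℕ) (hd : Monotone d)
    (B : Fin U → ℕ → ℝ) (hB : ∀ u j, 1 ≤ j → 0 ≤ B u j)
    (η : Fin U → ℝ) (hη : ∀ u, 0 ≤ η u)
    (Astar : ℕ) (hA : Astar = (Finset.Icc 1 C).sup (fun i => i - Vval U Y d B η i)) :
    FeasibleAssignment U Y d B η (Finset.Icc (Astar + 1) C) ∧
    ∀ S ⊆ Finset.Icc 1 C, FeasibleAssignment U Y d B η S → S.card ≤ C - Astar := by
  constructor
  · refine feasibleAssignment_of_card_filter_le hU hY hd hB hη fun i hi => ?_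
    obtain ⟨hAi, hiC⟩ := mem_Icc.mp hi
    have hsup : i - Vval U Y d B η i ≤ Astar :=
      hA ▸ le_sup (f := fun i => i - Vval U Y d B η i) (mem_Icc.mpr ⟨by omega, hiC⟩)
    have hprefix : {k ∈ Icc (Astar + 1) C | k ≤ i} = Icc (Astar + 1) i := by
      ext k; simp only [mem_filter, mem_Icc]; omega
    rw [hprefix, Nat.card_Icc]
    omega
  · intro S hS hfeas
    have hcard : #S ≤ C := by simpa using card_le_card hS
    suffices Astar ≤ C - #S by omega
    refine hA ▸ Finset.sup_le fun i hi => show i - Vval U Y d B η i ≤ C - #S from ?_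
    have hiC := (mem_Icc.mp hi).2
    have hlow := card_filter_le_Vval_of_feasible hY hd hfeas i
    have hhigh : #{k ∈ S | ¬k ≤ i} ≤ #(Ioc i C) := card_le_card fun k hk => by
      simp only [mem_filter] at hk
      simpa [mem_Ioc] using ⟨not_le.mp hk.2, (mem_Icc.mp (hS hk.1)).2⟩
    have hsplit : #{k ∈ S | k ≤ i} + #{k ∈ S | ¬k ≤ i} = #S :=
      card_filter_add_card_filter_not _
    rw [Nat.card_Ioc] at hhigh
    omega
end

section
/- If S ⊆ {1,…,C} admits a feasible assignment, then for every i ∈ {1,…,C}, the number of fetched chunks with index at most i satisfies |S ∩ {1,…,i}| ≤ V(i). Equivalently, any feasible assignment skips at least i − V(i) chunks among {1,…,i} whenever V(i) < i. -/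
/-- Any feasible set `S ⊆ {1,…,C}` satisfies the prefix bound
`|S ∩ {1,…,i}| ≤ V(i)` for every `i ∈ {1,…,C}`. -/
theorem feasible_prefix_le_V
    (C U : ℕ) (hU : 1 ≤ U) (Y : ℝ) (hY : 0 < Y)
    (d : ℕ → ℕ) (hd : Monotone d)
    (B : Fin U → ℕ → ℝ) (hB : ∀ u j, 1 ≤ j → 0 ≤ B u j)
    (η : Fin U → ℝ) (hη : ∀ u, 0 ≤ η u)
    (S : Finset ℕ) (hS : S ⊆ Finset.Icc 1 C)
    (hfeas : FeasibleAssignment U Y d B η S) :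
    ∀ i ∈ Finset.Icc 1 C,
      (S.filter (fun k => k ≤ i)).card ≤ Vval U Y d B η i := by
  obtain ⟨ℓ, z, hz0, hzY, hzd, hzB, hzη⟩ := hfeas
  intro i hi
  have hcard : (S.filter (fun k => k ≤ i)).card
      = ∑ u : Fin U, ((S.filter (fun k => k ≤ i)).filter (fun k => ℓ k = u)).card :=
    Finset.card_eq_sum_card_fiberwise (fun x _ => Finset.mem_univ (ℓ x))
  rw [hcard, Vval]
  apply Finset.sum_le_sum
  intro u _
  set T := (S.filter (fun k => k ≤ i)).filter (fun k => ℓ k = u) with hT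
  have hTS : ∀ k ∈ T, k ∈ S ∧ k ≤ i ∧ ℓ k = u := by
    intro k hk
    simp only [hT, Finset.mem_filter] at hk
    exact ⟨hk.1.1, hk.1.2, hk.2⟩
  have hTfib : T ⊆ S.filter (fun k => ℓ k = u) := by
    intro k hk
    obtain ⟨h1, _, h3⟩ := hTS k hk
    exact Finset.mem_filter.mpr ⟨h1, h3⟩
  have hfull : ∀ k ∈ T, ∑ j ∈ Finset.Icc 1 (d i), z k j = Y := by
    intro k hk
    obtain ⟨hkS, hki, _⟩ := hTS k hk
    have hdk : d k ≤ d i := hd hki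
    rw [← hzY k hkS]
    symm
    apply Finset.sum_subset (Finset.Icc_subset_Icc_right hdk)
    intro j hj hj'
    apply hzd k hkS
    right
    simp only [Finset.mem_Icc, not_and, not_le] at hj hj'
    exact hj' hj.1
  have hsum : (T.card : ℝ) * Y = ∑ k ∈ T, ∑ j ∈ Finset.Icc 1 (d i), z k j := by
    rw [Finset.sum_congr rfl hfull, Finset.sum_const, nsmul_eq_mul]
  have hη1 : (T.card : ℝ) * Y ≤ η u := by
    rw [hsum]
    calc ∑ k ∈ T, ∑ j ∈ Finset.Icc 1 (d i), z k j
        = ∑ k ∈ T, ∑ j ∈ Finset.Icc 1 (d k), z k j := by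
          refine Finset.sum_congr rfl fun k hk => ?_
          rw [hfull k hk, hzY k (hTS k hk).1]
      _ ≤ ∑ k ∈ S.filter (fun k => ℓ k = u), ∑ j ∈ Finset.Icc 1 (d k), z k j := by
          apply Finset.sum_le_sum_of_subset_of_nonneg hTfib
          intro k hk _
          exact Finset.sum_nonneg fun j _ => hz0 k (Finset.mem_filter.mp hk).1 j
      _ ≤ η u := hzη u
  have hη2 : (T.card : ℝ) * Y ≤ cumBW (B u) (d i) := by
    rw [hsum, Finset.sum_comm]
    unfold cumBW
    apply Finset.sum_le_sum
    intro j hj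
    have hj1 : 1 ≤ j := (Finset.mem_Icc.mp hj).1
    calc ∑ k ∈ T, z k j ≤ ∑ k ∈ S.filter (fun k => ℓ k = u), z k j :=
        Finset.sum_le_sum_of_subset_of_nonneg hTfib
          (fun k hk _ => hz0 k (Finset.mem_filter.mp hk).1 j)
      _ ≤ B u j := hzB u j hj1
  apply Nat.le_floor
  rw [le_div_iff₀ hY]
  exact le_min hη1 hη2
end

section
/- If some set S ⊆ {1,…,C} with |S| = C − A admits a feasible assignment, then the set {A+1, …, C} also admits a feasible assignment. In other words, whenever A chunks must be skipped, it is always feasible to skip exactly the first A chunks. -/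
/-! Counting from `0`, the `k`-th smallest element of `S` is at most `A + 1 + k`: the `|S| - k`
elements of `S` from it upwards all lie between it and `C`. So `A + 1 + k ↦` (`k`-th smallest
element of `S`) injects `{A+1, …, C}` into `S` without increasing any index, hence, `d` being
monotone, without increasing any deadline, and chunk `i` can reuse the schedule of its image. -/

open Finset

theorem Finset.orderEmbOfFin_add_card_le {S : Finset ℕ} {C n : ℕ} (hS : ∀ m ∈ S, m ≤ C)
    (h : S.card = n) (k : Fin n) : S.orderEmbOfFin h k + n ≤ C + 1 + k := by
  set e := S.orderEmbOfFin h
  have hupper : (Ici k).image e ⊆ Icc (e k) C := by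
    intro m hm
    obtain ⟨j, hj, rfl⟩ := mem_image.mp hm
    exact mem_Icc.mpr ⟨e.monotone (mem_Ici.mp hj), hS _ (S.orderEmbOfFin_mem h j)⟩
  have hcard := card_le_card hupper
  rw [card_image_of_injective _ e.injective, Fin.card_Ici, Nat.card_Icc] at hcard
  have := k.isLt
  omega

theorem exists_injOn_Icc_le_of_card_eq {S : Finset ℕ} {A C : ℕ} (hS : ∀ m ∈ S, m ≤ C)
    (h : S.card = C - A) :
    ∃ σ : ℕ → ℕ, Set.MapsTo σ (Icc (A + 1) C) S ∧ Set.InjOn σ (Icc (A + 1) C) ∧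
      ∀ i ∈ Icc (A + 1) C, σ i ≤ i := by
  let σ : ℕ → ℕ := fun i =>
    if hi : i - (A + 1) < C - A then S.orderEmbOfFin h ⟨i - (A + 1), hi⟩ else 0
  have hσ : ∀ i ∈ Icc (A + 1) C,
      ∃ k : Fin (C - A), i = A + 1 + k ∧ σ i = S.orderEmbOfFin h k := by
    intro i hi
    simp only [mem_Icc] at hi
    have hk : i - (A + 1) < C - A := by omega
    exact ⟨⟨i - (A + 1), hk⟩, by simp only; omega, dif_pos hk⟩
  refine ⟨σ, fun i hi => ?_, fun i hi i' hi' heq => ?_, fun i hi => ?_⟩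
  · obtain ⟨k, -, hσk⟩ := hσ i hi
    exact hσk ▸ S.orderEmbOfFin_mem h k
  · obtain ⟨k, rfl, hσk⟩ := hσ i hi
    obtain ⟨k', rfl, hσk'⟩ := hσ i' hi'
    rw [hσk, hσk'] at heq
    rw [(S.orderEmbOfFin h).injective heq]
  · obtain ⟨k, rfl, hσk⟩ := hσ i hi
    have := Finset.orderEmbOfFin_add_card_le hS h k
    simp only [mem_Icc] at hi
    omega

theorem FeasibleAssignment.of_injOn {U : ℕ} {Y : ℝ} {d : ℕ → ℕ} {B : Fin U → ℕ → ℝ}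
    {η : Fin U → ℝ} {S T : Finset ℕ} {σ : ℕ → ℕ} (hmaps : Set.MapsTo σ T S)
    (hinj : Set.InjOn σ T) (hdσ : ∀ i ∈ T, d (σ i) ≤ d i)
    (hS : FeasibleAssignment U Y d B η S) : FeasibleAssignment U Y d B η T := by
  obtain ⟨ℓ, z, hz0, hzY, hzd, hzB, hzη⟩ := hS
  have sum_comp_le : ∀ (u : Fin U) (g : ℕ → ℝ), (∀ m ∈ S, 0 ≤ g m) →
      ∑ i ∈ T with ℓ (σ i) = u, g (σ i) ≤ ∑ m ∈ S with ℓ m = u, g m := by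
    intro u g hg
    rw [← sum_image (hinj.mono (coe_subset.mpr (filter_subset _ T)))]
    refine sum_le_sum_of_subset_of_nonneg ?_ fun m hm _ => hg m (mem_filter.mp hm).1
    intro m hm
    obtain ⟨i, hi, rfl⟩ := mem_image.mp hm
    exact mem_filter.mpr ⟨hmaps (mem_filter.mp hi).1, (mem_filter.mp hi).2⟩
  have hwindow : ∀ i ∈ T,
      ∑ j ∈ Icc 1 (d i), z (σ i) j = ∑ j ∈ Icc 1 (d (σ i)), z (σ i) j := by
    intro i hi
    refine (sum_subset (Icc_subset_Icc_right (hdσ i hi)) fun j hj hj' => ?_).symm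
    exact hzd _ (hmaps hi) j (by simp only [mem_Icc] at hj hj'; omega)
  refine ⟨fun i => ℓ (σ i), fun i => z (σ i), fun i hi => hz0 _ (hmaps hi), fun i hi => ?_,
    fun i hi j hj => hzd _ (hmaps hi) j ?_, fun u j hj => ?_, fun u => ?_⟩
  · rw [hwindow i hi]
    exact hzY _ (hmaps hi)
  · have := hdσ i hi
    omega
  · exact (sum_comp_le u (z · j) fun m hm => hz0 m hm j).trans (hzB u j hj)
  · calc ∑ i ∈ T with ℓ (σ i) = u, ∑ j ∈ Icc 1 (d i), z (σ i) j
        = ∑ i ∈ T with ℓ (σ i) = u, ∑ j ∈ Icc 1 (d (σ i)), z (σ i) j :=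
          sum_congr rfl fun i hi => hwindow i (mem_filter.mp hi).1
      _ ≤ ∑ m ∈ S with ℓ m = u, ∑ j ∈ Icc 1 (d m), z m j :=
          sum_comp_le u (fun m => ∑ j ∈ Icc 1 (d m), z m j) fun m hm =>
            sum_nonneg fun j _ => hz0 m hm j
      _ ≤ η u := hzη u

theorem skip_first_A_feasible_general
    (C U : ℕ) (Y : ℝ)
    (d : ℕ → ℕ) (hd : Monotone d)
    (B : Fin U → ℕ → ℝ)
    (η : Fin U → ℝ)
    (A : ℕ)
    (h : ∃ S, S ⊆ Finset.Icc 1 C ∧ FeasibleAssignment U Y d B η S ∧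
      S.card = C - A) :
    FeasibleAssignment U Y d B η (Finset.Icc (A + 1) C) := by
  obtain ⟨S, hSsub, hfeas, hcard⟩ := h
  obtain ⟨σ, hmaps, hinj, hσle⟩ :=
    exists_injOn_Icc_le_of_card_eq (fun m hm => (mem_Icc.mp (hSsub hm)).2) hcard
  exact hfeas.of_injOn hmaps hinj fun i hi => hd (hσle i hi)

/-- If some feasible set has `C − A` chunks, then skipping exactly the first `A`
chunks, i.e. `S = {A+1, …, C}`, is also feasible. -/
theorem skip_first_A_feasible
    (C U : ℕ) (hU : 1 ≤ U) (Y : ℝ) (hY : 0 < Y)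
    (d : ℕ → ℕ) (hd : Monotone d)
    (B : Fin U → ℕ → ℝ) (hB : ∀ u j, 1 ≤ j → 0 ≤ B u j)
    (η : Fin U → ℝ) (hη : ∀ u, 0 ≤ η u)
    (A : ℕ) (hA : A ≤ C)
    (h : ∃ S, S ⊆ Finset.Icc 1 C ∧ FeasibleAssignment U Y d B η S ∧
      S.card = C - A) :
    FeasibleAssignment U Y d B η (Finset.Icc (A + 1) C) :=
  skip_first_A_feasible_general C U Y d hd B η A h
end

section
/- If S ⊆ {1,…,C} admits a feasible assignment and S' ⊆ {1,…,C} satisfies |S' ∩ {1,…,i}| ≤ |S ∩ {1,…,i}| for every i ∈ {1,…,C}, then S' also admits a feasible assignment. -/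
/-- If `S` is feasible and `S' ⊆ {1,…,C}` has pointwise-smaller prefix counts,
then `S'` is feasible as well. -/
theorem feasible_of_prefix_le
    (C U : ℕ) (hU : 1 ≤ U) (Y : ℝ) (hY : 0 < Y)
    (d : ℕ → ℕ) (hd : Monotone d)
    (B : Fin U → ℕ → ℝ) (hB : ∀ u j, 1 ≤ j → 0 ≤ B u j)
    (η : Fin U → ℝ) (hη : ∀ u, 0 ≤ η u)
    (S : Finset ℕ) (hS : S ⊆ Finset.Icc 1 C)
    (hfeas : FeasibleAssignment U Y d B η S)
    (S' : Finset ℕ) (hS' : S' ⊆ Finset.Icc 1 C)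
    (hle : ∀ i ∈ Finset.Icc 1 C,
      (S'.filter (fun k => k ≤ i)).card ≤ (S.filter (fun k => k ≤ i)).card) :
    FeasibleAssignment U Y d B η S' := by
  classical
  obtain ⟨ℓ, z, hz0, hzsum, hzzero, hslot, hlink⟩ := hfeas
  -- Hall condition for matching each chunk of S' to a no-larger chunk of S
  set t : {x // x ∈ S'} → Finset ℕ := fun x => S.filter (fun k => k ≤ x.1) with ht
  have hHall : ∀ s : Finset {x // x ∈ S'}, s.card ≤ (s.biUnion t).card := by
    intro s
    rcases s.eq_empty_or_nonempty with rfl | hs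
    · simp
    · have hsimg : (s.image (fun x => x.1)).Nonempty := hs.image _
      set m := (s.image (fun x => x.1)).max' hsimg with hm
      have hmmem : m ∈ s.image (fun x => x.1) := (s.image _).max'_mem hsimg
      obtain ⟨x0, hx0s, hx0⟩ := Finset.mem_image.mp hmmem
      have hmS' : m ∈ S' := hx0 ▸ x0.2
      have h1 : s.card = (s.image (fun x => x.1)).card :=
        (Finset.card_image_of_injective s Subtype.val_injective).symm
      have h2 : s.image (fun x => x.1) ⊆ S'.filter (fun k => k ≤ m) := by
        intro k hk
        obtain ⟨y, hys, hy⟩ := Finset.mem_image.mp hk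
        exact Finset.mem_filter.mpr ⟨hy ▸ y.2, Finset.le_max' _ _ hk⟩
      have h3 : (S'.filter (fun k => k ≤ m)).card ≤ (S.filter (fun k => k ≤ m)).card :=
        hle m (hS' hmS')
      have h4 : S.filter (fun k => k ≤ m) ⊆ s.biUnion t := by
        intro k hk
        refine Finset.mem_biUnion.mpr ⟨x0, hx0s, ?_⟩
        rw [ht]
        simpa [hx0] using hk
      calc s.card = (s.image (fun x => x.1)).card := h1
        _ ≤ (S'.filter (fun k => k ≤ m)).card := Finset.card_le_card h2
        _ ≤ (S.filter (fun k => k ≤ m)).card := h3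
        _ ≤ (s.biUnion t).card := Finset.card_le_card h4
  obtain ⟨f, hfinj, hft⟩ := (Finset.all_card_le_biUnion_card_iff_exists_injective t).mp hHall
  set F : ℕ → ℕ := fun i => if h : i ∈ S' then f ⟨i, h⟩ else i with hF
  have hFmem : ∀ i ∈ S', F i ∈ S := by
    intro i hi
    have := hft ⟨i, hi⟩
    rw [ht] at this
    simp only [hF, dif_pos hi]
    exact (Finset.mem_filter.mp this).1
  have hFle : ∀ i ∈ S', F i ≤ i := by
    intro i hi
    have := hft ⟨i, hi⟩
    rw [ht] at this
    simp only [hF, dif_pos hi]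
    exact (Finset.mem_filter.mp this).2
  have hFinjOn : ∀ i ∈ S', ∀ i' ∈ S', F i = F i' → i = i' := by
    intro i hi i' hi' h
    simp only [hF, dif_pos hi, dif_pos hi'] at h
    exact Subtype.ext_iff.mp (hfinj h)
  -- key: for i ∈ S', the downloads of chunk F i over Icc 1 (d i) sum to Y
  have hsum' : ∀ i ∈ S', ∑ j ∈ Finset.Icc 1 (d i), z (F i) j
      = ∑ j ∈ Finset.Icc 1 (d (F i)), z (F i) j := by
    intro i hi
    refine (Finset.sum_subset ?_ ?_).symm
    · exact Finset.Icc_subset_Icc_right (hd (hFle i hi))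
    · intro j hj hj'
      rw [Finset.mem_Icc] at hj
      refine hzzero (F i) (hFmem i hi) j (Or.inr ?_)
      by_contra hc
      push_neg at hc
      exact hj' (Finset.mem_Icc.mpr ⟨hj.1, hc⟩)
  refine ⟨fun i => ℓ (F i), fun i j => z (F i) j, ?_, ?_, ?_, ?_, ?_⟩
  · intro i hi j
    exact hz0 (F i) (hFmem i hi) j
  · intro i hi
    rw [hsum' i hi]
    exact hzsum (F i) (hFmem i hi)
  · intro i hi j hj
    refine hzzero (F i) (hFmem i hi) j ?_
    rcases hj with hj | hj
    · exact Or.inl hj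
    · exact Or.inr (lt_of_le_of_lt (hd (hFle i hi)) hj)
  · intro u j hj
    have hinj : ∀ a ∈ S'.filter (fun i => ℓ (F i) = u), ∀ b ∈ S'.filter (fun i => ℓ (F i) = u),
        F a = F b → a = b := by
      intro a ha b hb h
      exact hFinjOn a (Finset.mem_filter.mp ha).1 b (Finset.mem_filter.mp hb).1 h
    calc ∑ i ∈ S'.filter (fun i => ℓ (F i) = u), z (F i) j
        = ∑ k ∈ (S'.filter (fun i => ℓ (F i) = u)).image F, z k j := by
          rw [Finset.sum_image hinj]
      _ ≤ ∑ k ∈ S.filter (fun k => ℓ k = u), z k j := by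
          refine Finset.sum_le_sum_of_subset_of_nonneg ?_ ?_
          · intro k hk
            obtain ⟨a, ha, rfl⟩ := Finset.mem_image.mp hk
            have ha' := Finset.mem_filter.mp ha
            exact Finset.mem_filter.mpr ⟨hFmem a ha'.1, ha'.2⟩
          · intro k hk _
            exact hz0 k (Finset.mem_filter.mp hk).1 j
      _ ≤ B u j := hslot u j hj
  · intro u
    have hinj : ∀ a ∈ S'.filter (fun i => ℓ (F i) = u), ∀ b ∈ S'.filter (fun i => ℓ (F i) = u),
        F a = F b → a = b := by
      intro a ha b hb h
      exact hFinjOn a (Finset.mem_filter.mp ha).1 b (Finset.mem_filter.mp hb).1 h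
    calc ∑ i ∈ S'.filter (fun i => ℓ (F i) = u), ∑ j ∈ Finset.Icc 1 (d i), z (F i) j
        = ∑ i ∈ S'.filter (fun i => ℓ (F i) = u), ∑ j ∈ Finset.Icc 1 (d (F i)), z (F i) j := by
          refine Finset.sum_congr rfl ?_
          intro i hi
          exact hsum' i (Finset.mem_filter.mp hi).1
      _ = ∑ k ∈ (S'.filter (fun i => ℓ (F i) = u)).image F, ∑ j ∈ Finset.Icc 1 (d k), z k j := by
          rw [Finset.sum_image hinj]
      _ ≤ ∑ k ∈ S.filter (fun k => ℓ k = u), ∑ j ∈ Finset.Icc 1 (d k), z k j := by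
          refine Finset.sum_le_sum_of_subset_of_nonneg ?_ ?_
          · intro k hk
            obtain ⟨a, ha, rfl⟩ := Finset.mem_image.mp hk
            have ha' := Finset.mem_filter.mp ha
            exact Finset.mem_filter.mpr ⟨hFmem a ha'.1, ha'.2⟩
          · intro k hk _
            exact Finset.sum_nonneg fun j _ => hz0 k (Finset.mem_filter.mp hk).1 j
      _ ≤ η u := hlink u
end

section
/- For any feasible single-link schedule for a set S ⊆ {1,…,C} and any time t ∈ ℕ, the number of chunks i ∈ S with d(i) ≤ t is at most ⌊min(η, R(t))/Y⌋. -/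
/-- A feasible single-link schedule for a set `S` of chunks: download amounts
`z i j ≥ 0` so that each chunk `i ∈ S` gets its full layer of size `Y` by its
deadline `d i`, respecting the per-slot bandwidth `B` and the maximum
contribution `η`. -/
def FeasibleSchedule (Y : ℝ) (d : ℕ → ℕ) (B : ℕ → ℝ) (η : ℝ) (S : Finset ℕ) : Prop :=
  ∃ z : ℕ → ℕ → ℝ,
    (∀ i ∈ S, ∀ j, 0 ≤ z i j) ∧
    (∀ i ∈ S, ∑ j ∈ Finset.Icc 1 (d i), z i j = Y) ∧
    (∀ i ∈ S, ∀ j, (j < 1 ∨ d i < j) → z i j = 0) ∧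
    (∀ j, 1 ≤ j → ∑ i ∈ S, z i j ≤ B j) ∧
    (∑ i ∈ S, ∑ j ∈ Finset.Icc 1 (d i), z i j ≤ η)

/-- For any feasible single-link schedule for `S ⊆ {1,…,C}` and any time `t`,
the number of chunks of `S` with deadline at most `t` is at most
`⌊min(η, R(t))/Y⌋`. -/
theorem card_deadline_le_floor
    (C : ℕ) (Y : ℝ) (hY : 0 < Y)
    (d : ℕ → ℕ) (hd : Monotone d)
    (B : ℕ → ℝ) (hB : ∀ j, 1 ≤ j → 0 ≤ B j)
    (η : ℝ) (hη : 0 ≤ η)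
    (S : Finset ℕ) (hS : S ⊆ Finset.Icc 1 C)
    (hfeas : FeasibleSchedule Y d B η S) :
    ∀ t : ℕ, (S.filter (fun i => d i ≤ t)).card ≤ ⌊min η (cumBW B t) / Y⌋₊ := by

  obtain ⟨z, hz0, hzY, hzz, hzB, hzη⟩ := hfeas
  intro t
  set T := S.filter (fun i => d i ≤ t) with hT
  have hTS : T ⊆ S := Finset.filter_subset _ _
  have key : ∀ i ∈ T, ∑ j ∈ Finset.Icc 1 t, z i j = Y := by
    intro i hi
    have hiS := hTS hi
    have hdt : d i ≤ t := (Finset.mem_filter.mp hi).2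
    rw [← hzY i hiS]
    symm
    apply Finset.sum_subset (Finset.Icc_subset_Icc_right hdt)
    intro j hj hj'
    apply hzz i hiS
    simp only [Finset.mem_Icc, not_and_or, not_le] at hj'
    tauto
  have h1 : (T.card : ℝ) * Y ≤ cumBW B t := by
    unfold cumBW
    calc (T.card : ℝ) * Y = ∑ i ∈ T, ∑ j ∈ Finset.Icc 1 t, z i j := by
          rw [Finset.sum_congr rfl key, Finset.sum_const, nsmul_eq_mul]
      _ ≤ ∑ i ∈ S, ∑ j ∈ Finset.Icc 1 t, z i j := by
          apply Finset.sum_le_sum_of_subset_of_nonneg hTS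
          intro i hi _
          exact Finset.sum_nonneg fun j _ => hz0 i hi j
      _ = ∑ j ∈ Finset.Icc 1 t, ∑ i ∈ S, z i j := Finset.sum_comm
      _ ≤ ∑ j ∈ Finset.Icc 1 t, B j := by
          apply Finset.sum_le_sum
          intro j hj
          exact hzB j (Finset.mem_Icc.mp hj).1
  have h2 : (T.card : ℝ) * Y ≤ η := by
    calc (T.card : ℝ) * Y = ∑ i ∈ T, ∑ j ∈ Finset.Icc 1 (d i), z i j := by
          rw [Finset.sum_congr rfl (fun i hi => hzY i (hTS hi)), Finset.sum_const, nsmul_eq_mul]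
      _ ≤ ∑ i ∈ S, ∑ j ∈ Finset.Icc 1 (d i), z i j := by
          apply Finset.sum_le_sum_of_subset_of_nonneg hTS
          intro i hi _
          exact Finset.sum_nonneg fun j _ => hz0 i hi j
      _ ≤ η := hzη
  have hR : 0 ≤ cumBW B t :=
    Finset.sum_nonneg fun j hj => hB j (Finset.mem_Icc.mp hj).1
  rw [Nat.le_floor_iff (div_nonneg (le_min hη hR) hY.le)]
  rw [le_div_iff₀ hY]
  exact le_min h2 h1
end

section
/- Let λ_0,…,λ_N ≥ 0 and Y_0,…,Y_N > 0 satisfy λ_a Y_a > C · Σ_{n=a+1}^{N} λ_n Y_n for every a ∈ {0,…,N}. If c = (c_0,…,c_N) and c' = (c'_0,…,c'_N) are vectors of integers with 0 ≤ c_n ≤ C and 0 ≤ c'_n ≤ C for all n, and there exists a layer a such that c_n = c'_n for all n < a and c_a > c'_a, then Σ_{n=0}^{N} λ_n Y_n c_n > Σ_{n=0}^{N} λ_n Y_n c'_n. That is, among two strategies that fetch the same number of chunks at each layer below a, the strategy fetching more chunks at layer a achieves a strictly higher objective, regardless of its decisions at layers above a. -/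
/-- With a single user set, if the weights satisfy
`λ_a Y_a > C · Σ_{n=a+1}^N λ_n Y_n` for every layer `a`, then among two layer-count
vectors `c, c'` (with entries in `{0,…,C}`) agreeing below layer `a` and with
`c_a > c'_a`, the strategy `c` achieves strictly higher objective
`Σ_n λ_n Y_n c_n`. -/
theorem lower_layer_dominance
    (C N : ℕ) (lam Y : ℕ → ℝ)
    (hlam : ∀ n, 0 ≤ lam n) (hY : ∀ n, 0 < Y n)
    (hcond : ∀ a ≤ N,
      lam a * Y a > (C : ℝ) * ∑ n ∈ Finset.Icc (a + 1) N, lam n * Y n)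
    (c c' : ℕ → ℕ) (hc : ∀ n ≤ N, c n ≤ C) (hc' : ∀ n ≤ N, c' n ≤ C)
    (a : ℕ) (ha : a ≤ N)
    (hagree : ∀ n < a, c n = c' n) (hgt : c' a < c a) :
    ∑ n ∈ Finset.range (N + 1), lam n * Y n * (c n : ℝ) >
      ∑ n ∈ Finset.range (N + 1), lam n * Y n * (c' n : ℝ) := by
  rw [gt_iff_lt, ← sub_pos, ← Finset.sum_sub_distrib]
  have hsplit : Finset.range (N + 1) = Finset.range a ∪ Finset.Icc a N := by
    ext x; simp only [Finset.mem_range, Finset.mem_union, Finset.mem_Icc]; omega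
  have hdisj : Disjoint (Finset.range a) (Finset.Icc a N) := by
    rw [Finset.disjoint_left]
    intro x hx hx'
    simp only [Finset.mem_range] at hx
    simp only [Finset.mem_Icc] at hx'
    omega
  rw [hsplit, Finset.sum_union hdisj]
  have h0 : ∑ n ∈ Finset.range a,
      (lam n * Y n * (c n : ℝ) - lam n * Y n * (c' n : ℝ)) = 0 := by
    apply Finset.sum_eq_zero
    intro n hn
    rw [hagree n (Finset.mem_range.mp hn)]
    ring
  have hins : Finset.Icc a N = insert a (Finset.Icc (a + 1) N) := by
    ext x; simp only [Finset.mem_Icc, Finset.mem_insert]; omega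
  have hnot : a ∉ Finset.Icc (a + 1) N := by simp
  rw [h0, hins, Finset.sum_insert hnot, zero_add]
  have hdiff1 : (1 : ℝ) ≤ (c a : ℝ) - (c' a : ℝ) := by
    have : c' a + 1 ≤ c a := hgt
    have := Nat.cast_le (α := ℝ).mpr this
    push_cast at this
    linarith
  have hlamY : ∀ n, (0:ℝ) ≤ lam n * Y n := fun n => mul_nonneg (hlam n) (hY n).le
  have t1 : lam a * Y a ≤ lam a * Y a * ((c a : ℝ) - (c' a : ℝ)) := by
    nlinarith [hlamY a]
  have t2 : ∀ n ∈ Finset.Icc (a + 1) N,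
      -((C : ℝ) * (lam n * Y n)) ≤ lam n * Y n * (c n : ℝ) - lam n * Y n * (c' n : ℝ) := by
    intro n hn
    simp only [Finset.mem_Icc] at hn
    have h1 : (c' n : ℝ) ≤ (C : ℝ) := Nat.cast_le.mpr (hc' n hn.2)
    have h2 : (0 : ℝ) ≤ (c n : ℝ) := Nat.cast_nonneg _
    nlinarith [hlamY n]
  have t3 : -((C : ℝ) * ∑ n ∈ Finset.Icc (a + 1) N, lam n * Y n)
      ≤ ∑ n ∈ Finset.Icc (a + 1) N,
        (lam n * Y n * (c n : ℝ) - lam n * Y n * (c' n : ℝ)) := by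
    rw [Finset.mul_sum, ← Finset.sum_neg_distrib]
    exact Finset.sum_le_sum t2
  have hc0 := hcond a ha
  have : lam a * Y a * ((c a : ℝ) - (c' a : ℝ))
      = lam a * Y a * (c a : ℝ) - lam a * Y a * (c' a : ℝ) := by ring
  linarith [t1, t3, hc0]
end
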